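/- Let n, k be real numbers with 0 < k < n. Then φ₋(n,k) < varphi(n,k) < φ₊(n,k). If in addition 1 ≤ k ≤ n - 1, then 1/√8 ≤ varphi(n,k) < 1/√(2π). -/

import Mathlib

open Real

/-- `varphi(n,k) = Γ(n+1)/(Γ(k+1)Γ(n-k+1)) · k^{k+1/2}(n-k)^{n-k+1/2}/n^{n+1/2}`. -/
noncomputable def varphi (n k : ℝ) : ℝ :=
  Real.Gamma (n + 1) / (Real.Gamma (k + 1) * Real.Gamma (n - k + 1)) *
    (k ^ (k + 1 / 2 : ℝ) * (n - k) ^ (n - k + 1 / 2 : ℝ) / n ^ (n + 1 / 2 : ℝ))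

/-- `φ₊(n,k)`. -/
noncomputable def phiPlus (n k : ℝ) : ℝ :=
  1 / Real.sqrt (2 * Real.pi) *
    Real.exp (1 / (12 * n + 1) - 1 / (12 * k + 1) - 1 / (12 * (n - k) + 1))

/-- `φ₋(n,k)`. -/
noncomputable def phiMinus (n k : ℝ) : ℝ :=
  1 / Real.sqrt (2 * Real.pi) *
    Real.exp (1 / (12 * n) - 1 / (12 * k) - 1 / (12 * (n - k)))

/-!
Write `Γ(x+1) = √(2π) x^(x+1/2) e^(-x) e^(μ(x))`, so that
`varphi n k = e^(μ(n) - μ(k) - μ(n-k)) / √(2π)`. The remainder `μ` satisfies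
`μ(x) - μ(x+1) = (x+1/2) log(1+1/x) - 1` and `μ(x+N) → 0` (Euler's limit formula and Stirling's
formula). A function `f` with `f(x+N) → 0` whose step `f(x) - f(x+1)` is strictly decreasing is
itself positive and strictly decreasing, hence `f(n) < f(k) + f(n-k)`. Applied to
`1/(12x) - μ(x)` and `μ(x) - 1/(12x+1)`, whose steps are strictly decreasing by the series of
`log(1+1/x)` in powers of `1/(2x+1)`, this gives `φ₋ < varphi < φ₊`, and `φ₊ < 1/√(2π)` as
`k < n`. The step of `μ` is convex, so `μ(x) - μ(x+c)` decreases in `x`; thus for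
`1 ≤ k ≤ n-1` the exponent is smallest at `(n,k) = (2,1)`, where `varphi = 1/√8`.
-/

open Filter Topology Set

lemma Real.log_one_add_inv_lt {x : ℝ} (hx : 0 < x) :
    log (1 + x⁻¹) < 2 / (2 * x + 1) + 1 / (6 * x * (x + 1) * (2 * x + 1)) := by
  have hseries := (hasSum_nat_add_iff' 1).mpr (hasSum_log_one_add_inv hx)
  set t := 1 / (2 * x + 1) with ht
  have ht0 : 0 < t := by positivity
  have ht1 : t ^ 2 < 1 := by
    rw [sq_lt_one_iff₀ ht0.le, ht, div_lt_one (by positivity)]; linarith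
  -- past the first term, `2 t^(2k+1) / (2k+1) ≤ (2/3) t^(2k+1)`: a geometric series
  have hgeom := (hasSum_geometric_of_lt_one (sq_nonneg t) ht1).mul_left (2 / 3 * t ^ 3)
  have hterm (k : ℕ) : 2 * (1 / (2 * ((k + 1 : ℕ) : ℝ) + 1)) * t ^ (2 * (k + 1) + 1) =
      2 / (2 * k + 3) * t ^ 3 * (t ^ 2) ^ k := by
    rw [show 2 * (k + 1) + 1 = 3 + 2 * k by ring, pow_add, pow_mul]; push_cast; ring
  simp only [hterm] at hseries
  have hlt := hasSum_lt (i := 1) (fun k => ?_) ?_ hseries hgeom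
  · have h1 : 1 - t ^ 2 = 4 * x * (x + 1) / (2 * x + 1) ^ 2 := by rw [ht]; field_simp; ring
    rw [sub_lt_iff_lt_add', Finset.sum_range_one, h1] at hlt
    refine hlt.trans_eq ?_
    have : 2 * x + 1 ≠ 0 := by positivity
    rw [ht]
    norm_num
    field_simp
    ring
  · dsimp only
    gcongr
    linarith [k.cast_nonneg (α := ℝ)]
  · norm_num
    gcongr
    norm_num

lemma Real.le_log_one_add_inv {x : ℝ} (hx : 0 < x) :
    2 / (2 * x + 1) + 2 / (3 * (2 * x + 1) ^ 3) ≤ log (1 + x⁻¹) := by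
  have h := sum_le_hasSum (Finset.range 2) (fun k _ => by positivity) (hasSum_log_one_add_inv hx)
  refine le_of_eq_of_le ?_ h
  simp only [one_div, inv_pow, Finset.sum_range_succ, Finset.range_one, Finset.sum_singleton,
    CharP.cast_eq_zero, mul_zero, zero_add, inv_one, mul_one, pow_one, Nat.cast_one, Nat.reduceAdd]
  field_simp
  ring

lemma strictAntiOn_Ioi_of_hasDerivAt {f f' : ℝ → ℝ} {a : ℝ}
    (hf : ∀ x > a, HasDerivAt f (f' x) x) (hf' : ∀ x > a, f' x < 0) : StrictAntiOn f (Ioi a) :=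
  strictAntiOn_of_hasDerivWithinAt_neg (convex_Ioi a)
    (fun x hx => (hf x hx).continuousAt.continuousWithinAt)
    (fun x hx => (hf x (by simpa using hx)).hasDerivWithinAt)
    (fun x hx => hf' x (by simpa using hx))

lemma antitoneOn_Ioi_of_hasDerivAt {f f' : ℝ → ℝ} {a : ℝ}
    (hf : ∀ x > a, HasDerivAt f (f' x) x) (hf' : ∀ x > a, f' x ≤ 0) : AntitoneOn f (Ioi a) :=
  antitoneOn_of_hasDerivWithinAt_nonpos (convex_Ioi a)
    (fun x hx => (hf x hx).continuousAt.continuousWithinAt)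
    (fun x hx => (hf x (by simpa using hx)).hasDerivWithinAt)
    (fun x hx => hf' x (by simpa using hx))

lemma monotoneOn_Ioi_of_hasDerivAt {f f' : ℝ → ℝ} {a : ℝ}
    (hf : ∀ x > a, HasDerivAt f (f' x) x) (hf' : ∀ x > a, 0 ≤ f' x) : MonotoneOn f (Ioi a) :=
  monotoneOn_of_hasDerivWithinAt_nonneg (convex_Ioi a)
    (fun x hx => (hf x hx).continuousAt.continuousWithinAt)
    (fun x hx => (hf x (by simpa using hx)).hasDerivWithinAt)
    (fun x hx => hf' x (by simpa using hx))

lemma tendsto_one_div_mul_add_nat {a : ℝ} (ha : 0 < a) (x b : ℝ) :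
    Tendsto (fun N : ℕ => 1 / (a * (x + N) + b)) atTop (𝓝 0) := by
  have h : Tendsto (fun N : ℕ => a * (x + N) + b) atTop atTop :=
    tendsto_atTop_add_const_right _ b
      ((tendsto_atTop_add_const_left _ x tendsto_natCast_atTop_atTop).const_mul_atTop ha)
  exact h.inv_tendsto_atTop.congr fun _ => (one_div _).symm

section Telescoping

variable {f g : ℝ → ℝ}

lemma sum_range_eq_sub_of_sub_add_one (hfg : ∀ x > 0, f x - f (x + 1) = g x) {x : ℝ}
    (hx : 0 < x) (N : ℕ) : ∑ j ∈ Finset.range N, g (x + j) = f x - f (x + N) := by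
  have := Finset.sum_range_sub' (fun j : ℕ => f (x + j)) N
  simp only [Nat.cast_zero, add_zero, Nat.cast_succ] at this
  rw [← this]
  refine Finset.sum_congr rfl fun j _ => ?_
  rw [← add_assoc, hfg _ (by positivity)]

lemma antitoneOn_of_sub_add_one (hfg : ∀ x > 0, f x - f (x + 1) = g x)
    (hf : ∀ x > 0, Tendsto (fun N : ℕ => f (x + N)) atTop (𝓝 0))
    (hg : AntitoneOn g (Ioi 0)) : AntitoneOn f (Ioi 0) := by
  intro x (hx : 0 < x) y (hy : 0 < y) hxy
  have hlim := (hf x hx).sub (hf y hy)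
  rw [sub_zero] at hlim
  refine sub_nonneg.mp (le_of_tendsto hlim (Eventually.of_forall fun N => ?_))
  have hsum : 0 ≤ ∑ j ∈ Finset.range N, (g (x + j) - g (y + j)) :=
    Finset.sum_nonneg fun j _ => sub_nonneg.mpr <|
      hg (show 0 < x + j by positivity) (show 0 < y + j by positivity) (by linarith)
  rw [Finset.sum_sub_distrib, sum_range_eq_sub_of_sub_add_one hfg hx,
    sum_range_eq_sub_of_sub_add_one hfg hy] at hsum
  linarith

lemma strictAntiOn_of_sub_add_one (hfg : ∀ x > 0, f x - f (x + 1) = g x)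
    (hf : ∀ x > 0, Tendsto (fun N : ℕ => f (x + N)) atTop (𝓝 0))
    (hg : StrictAntiOn g (Ioi 0)) : StrictAntiOn f (Ioi 0) := by
  intro x (hx : 0 < x) y (hy : 0 < y) hxy
  have hshift := antitoneOn_of_sub_add_one hfg hf hg.antitoneOn
    (show 0 < x + 1 by linarith) (show 0 < y + 1 by linarith) (by linarith)
  linarith [hfg x hx, hfg y hy, hg hx hy hxy]

lemma pos_of_sub_add_one (hfg : ∀ x > 0, f x - f (x + 1) = g x)
    (hf : ∀ x > 0, Tendsto (fun N : ℕ => f (x + N)) atTop (𝓝 0))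
    (hg : StrictAntiOn g (Ioi 0)) {x : ℝ} (hx : 0 < x) : 0 < f x := by
  have hanti := strictAntiOn_of_sub_add_one hfg hf hg
  have hx1 : 0 < x + 1 := by linarith
  have hnonneg : 0 ≤ f (x + 1) := le_of_tendsto (hf (x + 1) hx1)
    (Eventually.of_forall fun N => hanti.antitoneOn hx1 (show 0 < x + 1 + N by positivity)
      (by simp))
  linarith [hanti hx hx1 (by linarith)]

lemma lt_add_sub_of_sub_add_one (hfg : ∀ x > 0, f x - f (x + 1) = g x)
    (hf : ∀ x > 0, Tendsto (fun N : ℕ => f (x + N)) atTop (𝓝 0))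
    (hg : StrictAntiOn g (Ioi 0)) {n k : ℝ} (hk : 0 < k) (hkn : k < n) :
    f n < f k + f (n - k) := by
  have hanti := strictAntiOn_of_sub_add_one hfg hf hg
  linarith [hanti (show 0 < k from hk) (show 0 < n by linarith) hkn,
    pos_of_sub_add_one hfg hf hg (sub_pos.mpr hkn)]

end Telescoping

lemma tendsto_log_Gamma_add_nat_sub {x : ℝ} (hx : 0 < x) :
    Tendsto (fun N : ℕ => log (Gamma (x + N + 1)) - x * log N - log N.factorial) atTop
      (𝓝 0) := by
  have hfeq : ∀ {y : ℝ}, 0 < y → (log ∘ Gamma) (y + 1) = (log ∘ Gamma) y + log y := fun hy => by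
    simp only [Function.comp_apply]
    rw [Gamma_add_one hy.ne', log_mul hy.ne' (Gamma_pos_of_pos hy).ne', add_comm]
  have h := (BohrMollerup.tendsto_log_gamma hx).const_sub (log (Gamma x))
  rw [sub_self] at h
  refine h.congr fun N => ?_
  have hadd := BohrMollerup.f_add_nat_eq hfeq hx (N + 1)
  simp only [Function.comp_apply, Nat.cast_succ, ← add_assoc] at hadd
  rw [hadd, BohrMollerup.logGammaSeq]
  ring

lemma tendsto_log_factorial_sub_stirling :
    Tendsto (fun N : ℕ => log N.factorial - (N + 1 / 2) * log N + N - log √(2 * π)) atTop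
      (𝓝 0) := by
  have h := (Stirling.tendsto_stirlingSeq_sqrt_pi.log (by positivity)).sub_const (log √π)
  rw [sub_self] at h
  refine h.congr' ?_
  filter_upwards [eventually_ne_atTop 0] with N hN
  have hN' : (N : ℝ) ≠ 0 := by exact_mod_cast hN
  rw [Stirling.log_stirlingSeq_formula, log_mul two_ne_zero hN', log_div hN' (exp_ne_zero 1),
    log_exp, sqrt_mul zero_le_two, log_mul (by positivity) (by positivity), log_sqrt zero_le_two]
  ring

noncomputable def stirlingRemainder (x : ℝ) : ℝ :=
  log (Gamma (x + 1)) - (x + 1 / 2) * log x + x - log √(2 * π)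

noncomputable def stirlingStep (x : ℝ) : ℝ := (x + 1 / 2) * log (1 + x⁻¹) - 1

lemma stirlingRemainder_sub_add_one {x : ℝ} (hx : 0 < x) :
    stirlingRemainder x - stirlingRemainder (x + 1) = stirlingStep x := by
  have hΓ := (Gamma_pos_of_pos (by linarith : 0 < x + 1)).ne'
  have h1 : log (1 + x⁻¹) = log (x + 1) - log x := by
    rw [← log_div (by positivity) hx.ne']; congr 1; field_simp
  rw [stirlingRemainder, stirlingRemainder, stirlingStep,
    Gamma_add_one (s := x + 1) (by positivity), log_mul (by positivity) hΓ, h1]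
  ring

lemma tendsto_stirlingRemainder_add_nat {x : ℝ} (hx : 0 < x) :
    Tendsto (fun N : ℕ => stirlingRemainder (x + N)) atTop (𝓝 0) := by
  have hlog : Tendsto (fun N : ℕ => log (1 + x / N)) atTop (𝓝 0) := by
    have := (((tendsto_const_nhds (x := x)).div_atTop tendsto_natCast_atTop_atTop).const_add 1).log
      (by norm_num : (1 : ℝ) + 0 ≠ 0)
    simpa using this
  have hshift : Tendsto (fun N : ℕ => x - (N * log (1 + x / N) + (x + 1 / 2) * log (1 + x / N)))
      atTop (𝓝 0) := by
    have := ((tendsto_mul_log_one_add_div_atTop x).comp tendsto_natCast_atTop_atTop).add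
      (hlog.const_mul (x + 1 / 2))
    simpa using this.const_sub x
  have h := ((tendsto_log_Gamma_add_nat_sub hx).add tendsto_log_factorial_sub_stirling).add hshift
  simp only [add_zero] at h
  refine h.congr' ?_
  filter_upwards [eventually_ne_atTop 0] with N hN
  have hN' : (0 : ℝ) < N := by positivity
  have : log (1 + x / N) = log (x + N) - log N := by
    rw [← log_div (by positivity) hN'.ne']; congr 1; field_simp; ring
  rw [stirlingRemainder, this]
  ring

lemma hasDerivAt_stirlingStep {x : ℝ} (hx : 0 < x) :
    HasDerivAt stirlingStep (log (1 + x⁻¹) - (x + 1 / 2) / (x * (x + 1))) x := by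
  have h1 : 1 + x⁻¹ ≠ 0 := by positivity
  have h := (((hasDerivAt_id' x).add_const (1 / 2)).mul
    (((hasDerivAt_inv hx.ne').const_add 1).log h1)).sub_const 1
  refine h.congr_deriv ?_
  field_simp
  ring

lemma monotoneOn_deriv_stirlingStep :
    MonotoneOn (fun x => log (1 + x⁻¹) - (x + 1 / 2) / (x * (x + 1))) (Ioi 0) := by
  refine monotoneOn_Ioi_of_hasDerivAt (f' := fun x => 1 / (2 * x ^ 2 * (x + 1) ^ 2))
    (fun x (hx : 0 < x) => ?_) (fun x (hx : 0 < x) => by positivity)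
  have h1 : 1 + x⁻¹ ≠ 0 := by positivity
  have h2 : x * (x + 1) ≠ 0 := by positivity
  have h := (((hasDerivAt_inv hx.ne').const_add 1).log h1).sub
    (((hasDerivAt_id' x).add_const (1 / 2)).div ((hasDerivAt_id' x).mul
      ((hasDerivAt_id' x).add_const 1)) h2)
  refine h.congr_deriv ?_
  simp only [Pi.mul_apply]
  field_simp
  ring

lemma strictAntiOn_one_div_sub_one_div_sub_stirlingStep :
    StrictAntiOn (fun x => 1 / (12 * x) - 1 / (12 * (x + 1)) - stirlingStep x) (Ioi 0) := by
  refine strictAntiOn_Ioi_of_hasDerivAt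
    (f' := fun x => -12 / (12 * x) ^ 2 + 12 / (12 * (x + 1)) ^ 2 -
      (log (1 + x⁻¹) - (x + 1 / 2) / (x * (x + 1))))
    (fun x (hx : 0 < x) => ?_) (fun x (hx : 0 < x) => ?_)
  · have h := (((hasDerivAt_const x (1 : ℝ)).div ((hasDerivAt_id' x).const_mul 12)
      (by positivity)).sub ((hasDerivAt_const x (1 : ℝ)).div
        (((hasDerivAt_id' x).add_const 1).const_mul 12) (by positivity))).sub
      (hasDerivAt_stirlingStep hx)
    refine h.congr_deriv ?_
    field_simp
    ring
  · have hlog := Real.le_log_one_add_inv hx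
    have key : -12 / (12 * x) ^ 2 + 12 / (12 * (x + 1)) ^ 2 -
        (2 / (2 * x + 1) + 2 / (3 * (2 * x + 1) ^ 3) - (x + 1 / 2) / (x * (x + 1))) =
        -((2 * x + 1) ^ 2 + 1) / (24 * x ^ 2 * (x + 1) ^ 2 * (2 * x + 1) ^ 3) := by
      field_simp
      ring
    have hneg : -((2 * x + 1) ^ 2 + 1) / (24 * x ^ 2 * (x + 1) ^ 2 * (2 * x + 1) ^ 3) < 0 :=
      div_neg_of_neg_of_pos (by nlinarith) (by positivity)
    linarith

lemma strictAntiOn_stirlingStep_sub_one_div_sub_one_div :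
    StrictAntiOn (fun x => stirlingStep x - (1 / (12 * x + 1) - 1 / (12 * (x + 1) + 1)))
      (Ioi 0) := by
  refine strictAntiOn_Ioi_of_hasDerivAt
    (f' := fun x => log (1 + x⁻¹) - (x + 1 / 2) / (x * (x + 1)) -
      (-12 / (12 * x + 1) ^ 2 + 12 / (12 * x + 13) ^ 2))
    (fun x (hx : 0 < x) => ?_) (fun x (hx : 0 < x) => ?_)
  · have h := (hasDerivAt_stirlingStep hx).sub
      (((hasDerivAt_const x (1 : ℝ)).div (((hasDerivAt_id' x).const_mul 12).add_const 1)
        (by positivity)).sub ((hasDerivAt_const x (1 : ℝ)).div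
          ((((hasDerivAt_id' x).add_const 1).const_mul 12).add_const 1) (by positivity)))
    refine h.congr_deriv ?_
    field_simp
    ring
  · have hlog := Real.log_one_add_inv_lt hx
    have key : 2 / (2 * x + 1) + 1 / (6 * x * (x + 1) * (2 * x + 1)) -
        (x + 1 / 2) / (x * (x + 1)) - (-12 / (12 * x + 1) ^ 2 + 12 / (12 * x + 13) ^ 2) =
        -(5184 * x ^ 3 + 3456 * x ^ 2 - 1680 * x + 169) /
          (3 * x * (x + 1) * (2 * x + 1) * (12 * x + 1) ^ 2 * (12 * x + 13) ^ 2) := by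
      field_simp
      ring
    have hcubic : 0 < 5184 * x ^ 3 + 3456 * x ^ 2 - 1680 * x + 169 := by
      nlinarith [mul_nonneg hx.le (sq_nonneg (72 * x - 12)), sq_nonneg (72 * x - 38 / 3)]
    have hneg : -(5184 * x ^ 3 + 3456 * x ^ 2 - 1680 * x + 169) /
        (3 * x * (x + 1) * (2 * x + 1) * (12 * x + 1) ^ 2 * (12 * x + 13) ^ 2) < 0 :=
      div_neg_of_neg_of_pos (by linarith) (by positivity)
    linarith

lemma sub_sub_lt_stirlingRemainder {n k : ℝ} (hk : 0 < k) (hkn : k < n) :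
    1 / (12 * n) - 1 / (12 * k) - 1 / (12 * (n - k)) <
      stirlingRemainder n - stirlingRemainder k - stirlingRemainder (n - k) := by
  have h := lt_add_sub_of_sub_add_one (f := fun x => 1 / (12 * x) - stirlingRemainder x)
    (fun x hx => by rw [← stirlingRemainder_sub_add_one hx]; ring)
    (fun x hx => by
      simpa using (tendsto_one_div_mul_add_nat (by norm_num : (0 : ℝ) < 12) x 0).sub
        (tendsto_stirlingRemainder_add_nat hx))
    strictAntiOn_one_div_sub_one_div_sub_stirlingStep hk hkn
  linarith

lemma stirlingRemainder_sub_sub_lt {n k : ℝ} (hk : 0 < k) (hkn : k < n) :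
    stirlingRemainder n - stirlingRemainder k - stirlingRemainder (n - k) <
      1 / (12 * n + 1) - 1 / (12 * k + 1) - 1 / (12 * (n - k) + 1) := by
  have h := lt_add_sub_of_sub_add_one (f := fun x => stirlingRemainder x - 1 / (12 * x + 1))
    (fun x hx => by rw [← stirlingRemainder_sub_add_one hx]; ring)
    (fun x hx => by
      simpa using (tendsto_stirlingRemainder_add_nat hx).sub
        (tendsto_one_div_mul_add_nat (by norm_num : (0 : ℝ) < 12) x 1))
    strictAntiOn_stirlingStep_sub_one_div_sub_one_div hk hkn
  linarith

lemma antitoneOn_stirlingRemainder_sub_add {c : ℝ} (hc : 0 ≤ c) :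
    AntitoneOn (fun x => stirlingRemainder x - stirlingRemainder (x + c)) (Ioi 0) := by
  refine antitoneOn_of_sub_add_one (g := fun x => stirlingStep x - stirlingStep (x + c))
    (fun x hx => ?_) (fun x hx => ?_) ?_
  · rw [← stirlingRemainder_sub_add_one hx, ← stirlingRemainder_sub_add_one (by positivity),
      add_right_comm]
    ring
  · simpa [add_right_comm] using
      (tendsto_stirlingRemainder_add_nat hx).sub (tendsto_stirlingRemainder_add_nat (by positivity))
  · refine antitoneOn_Ioi_of_hasDerivAt (fun x (hx : 0 < x) => (hasDerivAt_stirlingStep hx).sub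
      ((hasDerivAt_stirlingStep (by positivity)).comp_add_const x c))
      (fun x (hx : 0 < x) => sub_nonpos.mpr ?_)
    exact monotoneOn_deriv_stirlingStep (show 0 < x from hx) (show 0 < x + c by positivity)
      (by linarith)

lemma stirlingRemainder_two_sub_le {n k : ℝ} (hk : 1 ≤ k) (hkn : k ≤ n - 1) :
    stirlingRemainder 2 - stirlingRemainder 1 - stirlingRemainder 1 ≤
      stirlingRemainder n - stirlingRemainder k - stirlingRemainder (n - k) := by
  have h₁ := antitoneOn_stirlingRemainder_sub_add (c := k) (by positivity)
    (show (0 : ℝ) < 1 by norm_num) (show 0 < n - k by linarith) (by linarith)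
  have h₂ := antitoneOn_stirlingRemainder_sub_add (c := 1) zero_le_one
    (show (0 : ℝ) < 1 by norm_num) (show 0 < k by linarith) hk
  dsimp only at h₁ h₂
  rw [sub_add_cancel, add_comm 1 k] at h₁
  rw [one_add_one_eq_two] at h₂
  linarith

lemma log_varphi {n k : ℝ} (hk : 0 < k) (hkn : k < n) :
    log (varphi n k) =
      stirlingRemainder n - stirlingRemainder k - stirlingRemainder (n - k) - log √(2 * π) := by
  have hn : 0 < n := hk.trans hkn
  have hnk : 0 < n - k := sub_pos.mpr hkn
  rw [varphi, log_mul (by positivity) (by positivity), log_div (by positivity) (by positivity),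
    log_mul (by positivity) (by positivity), log_div (by positivity) (by positivity),
    log_mul (by positivity) (by positivity), log_rpow hk, log_rpow hnk, log_rpow hn,
    stirlingRemainder, stirlingRemainder, stirlingRemainder]
  ring

lemma varphi_eq_exp {n k : ℝ} (hk : 0 < k) (hkn : k < n) :
    varphi n k =
      exp (stirlingRemainder n - stirlingRemainder k - stirlingRemainder (n - k)) / √(2 * π) := by
  have hpos : 0 < varphi n k := by
    have hn : 0 < n := hk.trans hkn
    have hnk : 0 < n - k := sub_pos.mpr hkn
    unfold varphi
    positivity
  rw [← exp_log hpos, log_varphi hk hkn, exp_sub, exp_log (by positivity)]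

lemma varphi_two_one : varphi 2 1 = 1 / √8 := by
  have h8 : √8 = 2 * √2 := by
    rw [show (8 : ℝ) = 2 ^ 2 * 2 by norm_num, sqrt_mul (by positivity), sqrt_sq zero_le_two]
  have h2 : (2 : ℝ) ^ (2 + 1 / 2 : ℝ) = 4 * √2 := by
    rw [rpow_add two_pos, rpow_two, sqrt_eq_rpow]
    norm_num
  rw [varphi, h2, h8, Gamma_add_one two_ne_zero]
  norm_num
  ring

theorem varphi_bounds (n k : ℝ) (hk : 0 < k) (hkn : k < n) :
    (phiMinus n k < varphi n k ∧ varphi n k < phiPlus n k) ∧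
    (1 ≤ k → k ≤ n - 1 →
      1 / Real.sqrt 8 ≤ varphi n k ∧ varphi n k < 1 / Real.sqrt (2 * Real.pi)) := by
  have hφ := varphi_eq_exp hk hkn
  have hupper := stirlingRemainder_sub_sub_lt hk hkn
  refine ⟨⟨?_, ?_⟩, fun h1k hkn1 => ⟨?_, ?_⟩⟩
  · rw [phiMinus, one_div_mul_eq_div, hφ]
    gcongr exp ?_ / _
    exact sub_sub_lt_stirlingRemainder hk hkn
  · rw [phiPlus, one_div_mul_eq_div, hφ]
    gcongr exp ?_ / _
  · rw [← varphi_two_one, hφ, varphi_eq_exp one_pos one_lt_two, show (2 : ℝ) - 1 = 1 by norm_num]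
    gcongr exp ?_ / _
    exact stirlingRemainder_two_sub_le h1k hkn1
  · have hnk : 0 < n - k := sub_pos.mpr hkn
    have hneg : 1 / (12 * n + 1) - 1 / (12 * k + 1) - 1 / (12 * (n - k) + 1) < 0 := by
      have : 1 / (12 * n + 1) < 1 / (12 * k + 1) := by gcongr
      linarith [show 0 < 1 / (12 * (n - k) + 1) by positivity]
    rw [hφ]
    gcongr
    exact exp_lt_one_iff.mpr (hupper.trans hneg)
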